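/- arXiv:1009.4967 — 2 statements merged into one kernel-verified Lean document; each statement's English description precedes it below -/
import Mathlib

section
/- Assume the uniform boundedness condition (M-bd): ℙ-almost surely F₀(−M) = 0 and F₀(M) = 1 for a fixed constant M < ∞. Let Ψ_F and Ψ_{F_r} be the last-passage time constants obtained by using F_j, respectively the r-fold convolution F_{r,j} = F_{rj} * F_{rj+1} * ⋯ * F_{rj+r−1}, as the distribution of row j. If r = r(α) is a positive-integer-valued function with r → ∞ and r√α → 0 as α ↓ 0, then lim_{α↓0} α^{−1/2} | Ψ_F(α,1) − (1/r) Ψ_{F_r}(αr, 1) | = 0. -/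
/-!
Every up-right path to `(a, r n)` stays inside the `1 × r` blocks of some coarse path to `(a, n)`
(the blocks it visits), and every coarse path contains such a fine path (expand each of its
up-steps into `r` up-steps). The `(a + n + 1) r` cells of the blocks exceed the `a + r n + 1` cells
of the fine path by `(a + 1)(r - 1)`, so with weights bounded by `M` the two last-passage times
differ by at most `(a + 1)(r - 1) M`. Taking `a = ⌊n α r⌋` and dividing by `r n` gives
`|Ψ_F(α, 1) - Ψ_{F_r}(α r, 1) / r| ≤ α r M`, and `α r M / √α = r √α M → 0`.
-/

open MeasureTheory ProbabilityTheory Filter Set Topology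

noncomputable section

/-- Number of steps of an up-right lattice path from `z₁` to `z₂`. -/
def pathLen (z₁ z₂ : ℕ × ℕ) : ℕ := (z₂.1 - z₁.1) + (z₂.2 - z₁.2)

/-- `p` is a weakly nondecreasing nearest-neighbor lattice path from `z₁` to `z₂`. -/
def IsUpRightPath (z₁ z₂ : ℕ × ℕ) (p : ℕ → ℕ × ℕ) : Prop :=
  p 0 = z₁ ∧ p (pathLen z₁ z₂) = z₂ ∧
    ∀ k < pathLen z₁ z₂,
      p (k + 1) = ((p k).1 + 1, (p k).2) ∨ p (k + 1) = ((p k).1, (p k).2 + 1)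

/-- Last-passage time over weakly nondecreasing paths. -/
def LPP (X : ℕ × ℕ → ℝ) (z₁ z₂ : ℕ × ℕ) : ℝ :=
  sSup {s | ∃ p : ℕ → ℕ × ℕ, IsUpRightPath z₁ z₂ p ∧
    s = ∑ k ∈ Finset.range (pathLen z₁ z₂ + 1), X (p k)}

/-- Coarse-grained weights: the lattice is tiled with `1 × r` blocks
`B_r(x,y) = {(x, ry + k) : k = 0,…,r−1}` and the weights in each block are added up.  On
row `j` of the rescaled lattice the block weight has distribution
`F_{r,j} = F_{rj} * F_{rj+1} * ⋯ * F_{rj+r−1}` (convolution). -/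
def blockWeight (r : ℕ) (X : ℕ × ℕ → ℝ) (z : ℕ × ℕ) : ℝ :=
  ∑ k ∈ Finset.range r, X (z.1, r * z.2 + k)

theorem pathLen_zero_left (w : ℕ × ℕ) : pathLen (0, 0) w = w.1 + w.2 := by
  simp [pathLen]

namespace IsUpRightPath

variable {w : ℕ × ℕ} {p : ℕ → ℕ × ℕ}

theorem step (hp : IsUpRightPath (0, 0) w p) {k : ℕ} (hk : k < w.1 + w.2) :
    p (k + 1) = ((p k).1 + 1, (p k).2) ∨ p (k + 1) = ((p k).1, (p k).2 + 1) :=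
  hp.2.2 k (by rwa [pathLen_zero_left])

theorem apply_end (hp : IsUpRightPath (0, 0) w p) : p (w.1 + w.2) = w := by
  simpa [pathLen_zero_left] using hp.2.1

theorem fst_add_snd (hp : IsUpRightPath (0, 0) w p) :
    ∀ k ≤ w.1 + w.2, (p k).1 + (p k).2 = k := by
  intro k
  induction k with
  | zero => simp [hp.1]
  | succ k ih =>
    intro hk
    have := ih (by omega)
    rcases hp.step hk with h | h <;> rw [h] <;> omega

theorem injOn (hp : IsUpRightPath (0, 0) w p) : Set.InjOn p (Set.Iic (w.1 + w.2)) :=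
  fun k hk k' hk' h => by rw [← hp.fst_add_snd k hk, ← hp.fst_add_snd k' hk', h]

theorem restrict (hp : IsUpRightPath (0, 0) w p) {k : ℕ} (hk : k ≤ w.1 + w.2) :
    IsUpRightPath (0, 0) (p k) p := by
  have hlen : pathLen (0, 0) (p k) = k := by rw [pathLen_zero_left, hp.fst_add_snd k hk]
  exact ⟨hp.1, by rw [hlen], fun i hi => hp.step (by omega)⟩

theorem induction {motive : ℕ × ℕ → Prop} (hp : IsUpRightPath (0, 0) w p) (zero : motive (0, 0))
    (succ : ∀ v, IsUpRightPath (0, 0) v p → motive v →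
      (p (v.1 + v.2 + 1) = (v.1 + 1, v.2) ∨ p (v.1 + v.2 + 1) = (v.1, v.2 + 1)) →
        motive (p (v.1 + v.2 + 1))) :
    motive w := by
  suffices ∀ k ≤ w.1 + w.2, motive (p k) by simpa [hp.apply_end] using this _ le_rfl
  intro k
  induction k with
  | zero => intro _; rwa [hp.1]
  | succ k ih =>
    intro hk
    have hv := hp.restrict (k := k) (by omega)
    have hsum := hp.fst_add_snd k (by omega)
    have := succ (p k) hv (ih (by omega))
    rw [hsum] at this
    exact this (hp.step (by omega))

theorem exists_extend_right (hp : IsUpRightPath (0, 0) w p) :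
    ∃ p', IsUpRightPath (0, 0) (w.1 + 1, w.2) p' ∧ ∀ k ≤ w.1 + w.2, p' k = p k := by
  refine ⟨fun k => if k ≤ w.1 + w.2 then p k else (w.1 + 1, w.2), ⟨?_, ?_, ?_⟩, fun k hk => ?_⟩
  · simp [hp.1]
  · simp [pathLen_zero_left]
  · intro k hk
    rw [pathLen_zero_left] at hk
    rcases Nat.lt_or_ge k (w.1 + w.2) with h | h
    · simpa [h.le, Nat.succ_le_of_lt h] using hp.step h
    · have hk' : k = w.1 + w.2 := by omega
      simp [hk', hp.apply_end]
  · simp [hk]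

theorem exists_extend_up (hp : IsUpRightPath (0, 0) w p) (d : ℕ) :
    ∃ p', IsUpRightPath (0, 0) (w.1, w.2 + d) p' ∧ (∀ k ≤ w.1 + w.2, p' k = p k) ∧
      ∀ i ≤ d, p' (w.1 + w.2 + i) = (w.1, w.2 + i) := by
  refine ⟨fun k => if k ≤ w.1 + w.2 then p k else (w.1, w.2 + (k - (w.1 + w.2))),
    ⟨?_, ?_, ?_⟩, fun k hk => by simp [hk], fun i _ => ?_⟩
  · simp [hp.1]
  · rcases Nat.eq_zero_or_pos d with rfl | hd
    · simp [pathLen_zero_left, hp.apply_end]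
    · simp [pathLen_zero_left, show ¬ w.1 + (w.2 + d) ≤ w.1 + w.2 by omega]
      omega
  · intro k hk
    rw [pathLen_zero_left] at hk
    rcases Nat.lt_or_ge k (w.1 + w.2) with h | h
    · simpa [h.le, Nat.succ_le_of_lt h] using hp.step h
    · right
      rcases h.eq_or_lt with h | h
      · simp [← h, hp.apply_end]
      · simp [show ¬ k ≤ w.1 + w.2 by omega, show ¬ k + 1 ≤ w.1 + w.2 by omega]
        omega
  · rcases Nat.eq_zero_or_pos i with rfl | hi
    · simp [hp.apply_end]
    · simp [show ¬ w.1 + w.2 + i ≤ w.1 + w.2 by omega]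

theorem exists_extend (hp : IsUpRightPath (0, 0) w p) {w' : ℕ × ℕ} (h₁ : w.1 ≤ w'.1)
    (h₂ : w.2 ≤ w'.2) :
    ∃ p', IsUpRightPath (0, 0) w' p' ∧ ∀ k ≤ w.1 + w.2, p' k = p k := by
  obtain ⟨x, y⟩ := w'
  simp only at h₁ h₂
  obtain ⟨d, rfl⟩ := Nat.exists_eq_add_of_le h₁
  clear h₁
  have hright : ∃ p', IsUpRightPath (0, 0) (w.1 + d, w.2) p' ∧ ∀ k ≤ w.1 + w.2, p' k = p k := by
    induction d with
    | zero => exact ⟨p, hp, fun _ _ => rfl⟩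
    | succ d ih =>
      obtain ⟨p', hp', hpp'⟩ := ih
      obtain ⟨p'', hp'', hp'p''⟩ := hp'.exists_extend_right
      exact ⟨p'', by simpa [add_assoc] using hp'',
        fun k hk => (hp'p'' k (by simp; omega)).trans (hpp' k hk)⟩
  obtain ⟨p', hp', hpp'⟩ := hright
  obtain ⟨p'', hp'', hp'p'', -⟩ := hp'.exists_extend_up (y - w.2)
  exact ⟨p'', by simpa [Nat.add_sub_cancel' h₂] using hp'',
    fun k hk => (hp'p'' k (by simp; omega)).trans (hpp' k hk)⟩

end IsUpRightPath

theorem exists_isUpRightPath (w : ℕ × ℕ) : ∃ p, IsUpRightPath (0, 0) w p := by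
  have h₀ : IsUpRightPath (0, 0) (0, 0) (fun _ => (0, 0)) := ⟨rfl, rfl, by simp [pathLen]⟩
  obtain ⟨p, hp, -⟩ := h₀.exists_extend (Nat.zero_le w.1) (Nat.zero_le w.2)
  exact ⟨p, hp⟩

theorem abs_sum_sub_sum_comp_le {ι κ : Type*} [DecidableEq κ] {s : Finset ι} {t : Finset κ}
    {φ : ι → κ} (hφ : Set.MapsTo φ s t) (hinj : Set.InjOn φ s) {f : κ → ℝ} {M : ℝ}
    (hf : ∀ x ∈ t, |f x| ≤ M) :
    |∑ x ∈ t, f x - ∑ i ∈ s, f (φ i)| ≤ ((t.card : ℝ) - s.card) * M := by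
  have hsub : s.image φ ⊆ t := Finset.image_subset_iff.2 hφ
  have hcard : ((t \ s.image φ).card : ℝ) = t.card - s.card := by
    rw [Finset.card_sdiff_of_subset hsub, Finset.card_image_of_injOn hinj,
      Nat.cast_sub (Finset.card_image_of_injOn hinj ▸ Finset.card_le_card hsub)]
  calc |∑ x ∈ t, f x - ∑ i ∈ s, f (φ i)|
      = |∑ x ∈ t \ s.image φ, f x| := by rw [Finset.sum_sdiff_eq_sub hsub, Finset.sum_image hinj]
    _ ≤ ∑ x ∈ t \ s.image φ, |f x| := Finset.abs_sum_le_sum_abs _ _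
    _ ≤ (t \ s.image φ).card • M :=
      Finset.sum_le_card_nsmul _ _ _ fun x hx => hf x (Finset.mem_sdiff.1 hx).1
    _ = ((t.card : ℝ) - s.card) * M := by rw [nsmul_eq_mul, hcard]

theorem sum_le_LPP {X : ℕ × ℕ → ℝ} {M : ℝ} (hX : ∀ z, X z ≤ M) {w : ℕ × ℕ} {p : ℕ → ℕ × ℕ}
    (hp : IsUpRightPath (0, 0) w p) :
    ∑ k ∈ Finset.range (w.1 + w.2 + 1), X (p k) ≤ LPP X (0, 0) w := by
  refine le_csSup ⟨(Finset.range (w.1 + w.2 + 1)).card • M, ?_⟩ ⟨p, hp, by rw [pathLen_zero_left]⟩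
  rintro _ ⟨p', -, rfl⟩
  rw [pathLen_zero_left]
  exact Finset.sum_le_card_nsmul _ _ M fun z _ => hX (p' z)

theorem LPP_le {X : ℕ × ℕ → ℝ} {w : ℕ × ℕ} {c : ℝ}
    (h : ∀ p, IsUpRightPath (0, 0) w p → ∑ k ∈ Finset.range (w.1 + w.2 + 1), X (p k) ≤ c) :
    LPP X (0, 0) w ≤ c := by
  obtain ⟨p, hp⟩ := exists_isUpRightPath w
  refine csSup_le ⟨_, p, hp, rfl⟩ ?_
  rintro _ ⟨p', hp', rfl⟩
  simpa [pathLen_zero_left] using h p' hp'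

/-- The cells `q 0, …, q L` all lie in the blocks `B_r(p 0), …, B_r(p m)`. -/
def InBlocks (r : ℕ) (p : ℕ → ℕ × ℕ) (m : ℕ) (q : ℕ → ℕ × ℕ) (L : ℕ) : Prop :=
  ∀ k ≤ L, ∃ j ≤ m, ∃ h < r, q k = ((p j).1, r * (p j).2 + h)

section Blocks

variable {r : ℕ}

/-- Expand every up-step of the coarse path into `r` up-steps. -/
theorem exists_fine_path_inBlocks (hr : 0 < r) {w : ℕ × ℕ} {p : ℕ → ℕ × ℕ}
    (hp : IsUpRightPath (0, 0) w p) :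
    ∃ q, IsUpRightPath (0, 0) (w.1, r * w.2) q ∧ InBlocks r p (w.1 + w.2) q (w.1 + r * w.2) := by
  refine hp.induction (motive := fun w => ∃ q, IsUpRightPath (0, 0) (w.1, r * w.2) q ∧
    InBlocks r p (w.1 + w.2) q (w.1 + r * w.2)) ?_ ?_
  · refine ⟨fun _ => (0, 0), ⟨rfl, rfl, by simp [pathLen]⟩,
      fun _ _ => ⟨0, Nat.zero_le _, 0, hr, by simp [hp.1]⟩⟩
  rintro v hv ⟨q, hq, hcov⟩ (hstep | hstep) <;> rw [hstep]
  · obtain ⟨q', hq', hqq'⟩ := hq.exists_extend_right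
    refine ⟨q', hq', fun k hk => ?_⟩
    rcases Nat.lt_or_ge (v.1 + r * v.2) k with hnew | hold
    · refine ⟨v.1 + v.2 + 1, by simp, 0, hr, ?_⟩
      have hk : k = v.1 + 1 + r * v.2 := by simp at hk; omega
      simpa [hk, hstep, add_right_comm] using hq'.apply_end
    · obtain ⟨j, hj, h, hh, hqk⟩ := hcov k hold
      exact ⟨j, by simp; omega, h, hh, by rw [hqq' k hold, hqk]⟩
  · obtain ⟨q', hq', hqq', hnew⟩ := hq.exists_extend_up r
    refine ⟨q', by simpa [mul_add] using hq', fun k hk => ?_⟩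
    rcases Nat.lt_or_ge (v.1 + r * v.2) k with hk' | hold
    · obtain ⟨i, rfl⟩ := Nat.exists_eq_add_of_lt hk'
      have hi : i + 1 ≤ r := by simp [mul_add] at hk; omega
      rw [add_assoc, hnew (i + 1) hi]
      rcases hi.lt_or_eq with hi | hi
      · exact ⟨v.1 + v.2, by simp, i + 1, hi, by simp [hv.apply_end]⟩
      · exact ⟨v.1 + v.2 + 1, by simp, 0, hr, by simp [hstep, hi, mul_add]⟩
    · obtain ⟨j, hj, h, hh, hqk⟩ := hcov k hold
      exact ⟨j, by simp; omega, h, hh, by rw [hqq' k hold, hqk]⟩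

/-- The blocks visited by a fine path, in order, form a coarse path. -/
theorem exists_coarse_path_inBlocks (hr : 0 < r) {w : ℕ × ℕ} {q : ℕ → ℕ × ℕ}
    (hq : IsUpRightPath (0, 0) w q) :
    ∃ p, IsUpRightPath (0, 0) (w.1, w.2 / r) p ∧ InBlocks r p (w.1 + w.2 / r) q (w.1 + w.2) := by
  refine hq.induction (motive := fun w => ∃ p, IsUpRightPath (0, 0) (w.1, w.2 / r) p ∧
    InBlocks r p (w.1 + w.2 / r) q (w.1 + w.2)) ?_ ?_
  · refine ⟨fun _ => (0, 0), ⟨rfl, by simp, by simp [pathLen]⟩,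
      fun k hk => ⟨0, Nat.zero_le _, 0, hr, ?_⟩⟩
    simp at hk
    simp [hk, hq.1]
  rintro v hv ⟨p, hp, hcov⟩ hstep
  set v' := q (v.1 + v.2 + 1)
  have hle : v.1 ≤ v'.1 ∧ v.2 ≤ v'.2 := by rcases hstep with h | h <;> simp [h]
  have hlen : v'.1 + v'.2 = v.1 + v.2 + 1 := by rcases hstep with h | h <;> simp [h] <;> omega
  have hdiv : v.2 / r ≤ v'.2 / r := Nat.div_le_div_right hle.2
  obtain ⟨p', hp', hpp'⟩ := hp.exists_extend (w' := (v'.1, v'.2 / r)) hle.1 hdiv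
  refine ⟨p', hp', fun k hk => ?_⟩
  rcases Nat.lt_or_ge (v.1 + v.2) k with hnew | hold
  · refine ⟨v'.1 + v'.2 / r, le_rfl, v'.2 % r, Nat.mod_lt _ hr, ?_⟩
    rw [hp'.apply_end, Nat.div_add_mod, show k = v.1 + v.2 + 1 by omega]
  · obtain ⟨j, hj, h, hh, hqk⟩ := hcov k hold
    exact ⟨j, by omega, h, hh, by rw [hpp' j hj, hqk]⟩

/-- A fine path inside `m + 1` blocks misses exactly `(m + 1) r - (L + 1)` of their cells, each
of weight at most `M`. -/
theorem InBlocks.abs_sum_blockWeight_sub_sum_le {X : ℕ × ℕ → ℝ} {M : ℝ} (hX : ∀ z, |X z| ≤ M)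
    {p q : ℕ → ℕ × ℕ} {m : ℕ} {u : ℕ × ℕ} (hq : IsUpRightPath (0, 0) u q)
    (hcov : InBlocks r p m q (u.1 + u.2)) :
    |∑ j ∈ Finset.range (m + 1), blockWeight r X (p j) -
        ∑ k ∈ Finset.range (u.1 + u.2 + 1), X (q k)| ≤
      (((m : ℝ) + 1) * r - (u.1 + u.2 + 1)) * M := by
  have hcov' : ∀ k ∈ Finset.range (u.1 + u.2 + 1), ∃ jh ∈ Finset.range (m + 1) ×ˢ Finset.range r,
      q k = ((p jh.1).1, r * (p jh.1).2 + jh.2) := by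
    intro k hk
    obtain ⟨j, hj, h, hh, hqk⟩ := hcov k (Nat.lt_succ_iff.1 (Finset.mem_range.1 hk))
    exact ⟨(j, h), by simp; omega, hqk⟩
  choose! φ hφ hqφ using hcov'
  have hinj : Set.InjOn φ (Finset.range (u.1 + u.2 + 1)) := fun k hk k' hk' h =>
    hq.injOn (Nat.lt_succ_iff.1 (Finset.mem_range.1 hk))
      (Nat.lt_succ_iff.1 (Finset.mem_range.1 hk')) (by rw [hqφ k hk, hqφ k' hk', h])
  have hblocks : ∑ j ∈ Finset.range (m + 1), blockWeight r X (p j) =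
      ∑ jh ∈ Finset.range (m + 1) ×ˢ Finset.range r, X ((p jh.1).1, r * (p jh.1).2 + jh.2) := by
    rw [Finset.sum_product]; rfl
  have hpath : ∑ k ∈ Finset.range (u.1 + u.2 + 1), X (q k) =
      ∑ k ∈ Finset.range (u.1 + u.2 + 1), X ((p (φ k).1).1, r * (p (φ k).1).2 + (φ k).2) :=
    Finset.sum_congr rfl fun k hk => by rw [hqφ k hk]
  rw [hblocks, hpath]
  convert abs_sum_sub_sum_comp_le hφ hinj
    (f := fun jh => X ((p jh.1).1, r * (p jh.1).2 + jh.2)) (fun _ _ => hX _) using 2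
  simp

theorem blockWeight_le {X : ℕ × ℕ → ℝ} {M : ℝ} (hX : ∀ z, X z ≤ M) (z : ℕ × ℕ) :
    blockWeight r X z ≤ r * M := by
  simpa [blockWeight] using
    Finset.sum_le_card_nsmul (Finset.range r) _ M fun k _ => hX (z.1, r * z.2 + k)

theorem abs_LPP_sub_LPP_blockWeight_le {X : ℕ × ℕ → ℝ} {M : ℝ} (hX : ∀ z, |X z| ≤ M)
    (hr : 0 < r) (a n : ℕ) :
    |LPP X (0, 0) (a, r * n) - LPP (blockWeight r X) (0, 0) (a, n)| ≤ (a + 1) * (r - 1) * M := by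
  have hX' : ∀ z, X z ≤ M := fun z => (le_abs_self _).trans (hX z)
  have hcount : ((a + n : ℕ) + 1 : ℝ) * r - ((a, r * n).1 + (a, r * n).2 + 1 : ℕ) =
      (a + 1) * (r - 1) := by push_cast; ring
  rw [abs_sub_le_iff]
  constructor
  · rw [sub_le_iff_le_add]
    refine LPP_le fun q hq => ?_
    obtain ⟨p, hp, hcov⟩ := exists_coarse_path_inBlocks hr hq
    simp only [Nat.mul_div_cancel_left n hr] at hp hcov
    have hcmp := hcov.abs_sum_blockWeight_sub_sum_le hX hq
    have hcoarse := sum_le_LPP (blockWeight_le (r := r) hX') hp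
    rw [← hcount]
    push_cast at hcmp ⊢
    linarith [(abs_le.1 hcmp).1]
  · rw [sub_le_iff_le_add]
    refine LPP_le fun p hp => ?_
    obtain ⟨q, hq, hcov⟩ := exists_fine_path_inBlocks hr hp
    have hcmp := hcov.abs_sum_blockWeight_sub_sum_le hX hq
    have hfine := sum_le_LPP hX' hq
    rw [← hcount]
    push_cast at hcmp hfine ⊢
    linarith [(abs_le.1 hcmp).2]

/-- The defect `(a + 1)(r - 1) M` of the coarse-graining comparison at `a = ⌊n α r⌋` is of
order `n α r² M`, which gives `α r M` after dividing by `r n`. -/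
theorem abs_sub_one_div_mul_le_of_tendsto_LPP {X : ℕ × ℕ → ℝ} {M : ℝ} (hX : ∀ z, |X z| ≤ M)
    (hr : 0 < r) {α A B : ℝ} (hα : 0 < α)
    (hA : Tendsto (fun n : ℕ => LPP X (0, 0) (⌊(n : ℝ) * α⌋₊, ⌊(n : ℝ) * 1⌋₊) / n) atTop (𝓝 A))
    (hB : Tendsto (fun n : ℕ =>
      LPP (blockWeight r X) (0, 0) (⌊(n : ℝ) * (α * r)⌋₊, ⌊(n : ℝ) * 1⌋₊) / n) atTop (𝓝 B)) :
    |A - (1 / r) * B| ≤ α * r * M := by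
  have hM : 0 ≤ M := (abs_nonneg _).trans (hX 0)
  have hr' : (1 : ℝ) ≤ r := Nat.one_le_cast.2 hr
  set a : ℕ → ℕ := fun n => ⌊(n : ℝ) * (α * r)⌋₊ with ha
  have hfine : Tendsto (fun n : ℕ => LPP X (0, 0) (a n, r * n) / (r * n : ℕ)) atTop (𝓝 A) := by
    refine (hA.comp (tendsto_id.const_mul_atTop' hr)).congr fun n => ?_
    simp only [Function.comp, id, ha, mul_one, Nat.floor_natCast]
    congr 4
    push_cast
    ring
  have hcoarse : Tendsto (fun n : ℕ => 1 / r * (LPP (blockWeight r X) (0, 0) (a n, n) / n))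
      atTop (𝓝 (1 / r * B)) :=
    (hB.congr fun n => by simp [ha]).const_mul _
  have herr : Tendsto (fun n : ℕ => α * r * M + M / n) atTop (𝓝 (α * r * M)) := by
    simpa using tendsto_const_nhds.add (tendsto_const_div_atTop_nhds_zero_nat M)
  refine le_of_tendsto_of_tendsto (hfine.sub hcoarse).abs herr
    (eventually_atTop.2 ⟨1, fun n hn => ?_⟩)
  have hrn : (0 : ℝ) < r * n := mul_pos (Nat.cast_pos.2 hr) (Nat.cast_pos.2 hn)
  have han : (a n : ℝ) ≤ n * (α * r) := Nat.floor_le (by positivity)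
  dsimp only
  rw [show ∀ x y : ℝ, x / ((r * n : ℕ) : ℝ) - 1 / r * (y / n) = (x - y) / (r * n) by
      intro x y; push_cast; ring,
    abs_div, abs_of_pos hrn, div_le_iff₀ hrn]
  calc _ ≤ (a n + 1) * (r - 1) * M := abs_LPP_sub_LPP_blockWeight_le hX hr (a n) n
    _ ≤ (n * (α * r) + 1) * r * M := by gcongr; linarith
    _ = (α * r * M + M / n) * (r * n) := by field_simp

end Blocks

theorem measureReal_eq_of_condExp_indicator_ae_eq_const {Ω : Type*} {m m0 : MeasurableSpace Ω}
    (hm : m ≤ m0) {μ : Measure Ω} [IsProbabilityMeasure μ] {s : Set Ω} (hs : MeasurableSet s)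
    {c : ℝ} (h : μ[s.indicator (fun _ => (1 : ℝ)) | m] =ᵐ[μ] fun _ => c) :
    μ.real s = c := by
  calc μ.real s = ∫ ω, s.indicator (fun _ => (1 : ℝ)) ω ∂μ := (integral_indicator_one hs).symm
    _ = ∫ ω, (μ[s.indicator (fun _ => (1 : ℝ)) | m]) ω ∂μ := (integral_condExp hm).symm
    _ = c := by rw [integral_congr_ae h]; simp

theorem ae_abs_le_of_condExp_indicator_ae_eq {Ω : Type*} {m m0 : MeasurableSpace Ω}
    (hm : m ≤ m0) {μ : Measure Ω} [IsProbabilityMeasure μ] {Y : Ω → ℝ} (hY : Measurable Y)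
    {ν : Ω → Measure ℝ}
    (hν : ∀ s, MeasurableSet s →
      μ[(Y ⁻¹' s).indicator (fun _ => (1 : ℝ)) | m] =ᵐ[μ] fun ω => (ν ω s).toReal)
    {M : ℝ} (hM : ∀ᵐ ω ∂μ, ν ω (Iic (-M)) = 0 ∧ ν ω (Iic M) = 1) :
    ∀ᵐ ω ∂μ, |Y ω| ≤ M := by
  have hupper : μ.real (Y ⁻¹' Iic M) = 1 :=
    measureReal_eq_of_condExp_indicator_ae_eq_const hm (hY measurableSet_Iic)
      ((hν _ measurableSet_Iic).trans (hM.mono fun ω h => by simp [h.2]))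
  have hlower : μ.real (Y ⁻¹' Iic (-M)) = 0 :=
    measureReal_eq_of_condExp_indicator_ae_eq_const hm (hY measurableSet_Iic)
      ((hν _ measurableSet_Iic).trans (hM.mono fun ω h => by simp [h.1]))
  have hle : ∀ᵐ ω ∂μ, Y ω ≤ M := by
    refine ae_iff.2 ((measureReal_eq_zero_iff).1 ?_)
    rw [show {ω | ¬Y ω ≤ M} = (Y ⁻¹' Iic M)ᶜ from rfl,
      probReal_compl_eq_one_sub (hY measurableSet_Iic), hupper, sub_self]
  have hgt : ∀ᵐ ω ∂μ, ¬Y ω ≤ -M := ae_iff.2 <| by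
    simp only [not_not]
    exact (measureReal_eq_zero_iff).1 hlower
  filter_upwards [hle, hgt] with ω hle hgt
  exact abs_le.2 ⟨(not_le.1 hgt).le, hle⟩

theorem coarse_graining_lemma_general
    {Ω : Type} (𝒢 : MeasurableSpace Ω) [mΩ : MeasurableSpace Ω]
    (P : Measure Ω) [IsProbabilityMeasure P]
    (F : ℕ → Ω → Measure ℝ)
    (X : ℕ × ℕ → Ω → ℝ)
    (hXmeas : ∀ z, Measurable (X z))
    (h𝒢 : 𝒢 ≤ mΩ)
    (hCD : ∀ z : ℕ × ℕ, ∀ s : Set ℝ, MeasurableSet s →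
      (P[(X z ⁻¹' s).indicator (fun _ => (1 : ℝ)) | 𝒢])
        =ᵐ[P] fun ω => ((F z.2 ω) s).toReal)
    -- (M-bd): uniformly bounded weights
    (M : ℝ) (hMbd : ∀ j, ∀ᵐ ω ∂P,
      (F j ω) (Set.Iic (-M)) = 0 ∧ (F j ω) (Set.Iic M) = 1)
    -- Ψ_F is the time constant of the original model
    (ΨF : ℝ → ℝ → ℝ)
    (hΨF : ∀ x y : ℝ, 0 < x → 0 < y →
      ∀ᵐ ω ∂P, Tendsto (fun n : ℕ =>
          LPP (fun z => X z ω) (0, 0) (⌊(n : ℝ) * x⌋₊, ⌊(n : ℝ) * y⌋₊) / n)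
        atTop (nhds (ΨF x y)))
    -- Ψ_{F_r} is the time constant of the coarse-grained model with row distributions F_{r,j}
    (ΨFr : ℕ → ℝ → ℝ → ℝ)
    (hΨFr : ∀ r : ℕ, 1 ≤ r → ∀ x y : ℝ, 0 < x → 0 < y →
      ∀ᵐ ω ∂P, Tendsto (fun n : ℕ =>
          LPP (blockWeight r (fun z => X z ω)) (0, 0) (⌊(n : ℝ) * x⌋₊, ⌊(n : ℝ) * y⌋₊) / n)
        atTop (nhds (ΨFr r x y)))
    -- r = r(α) is a positive-integer-valued function with r → ∞ and r√α → 0 as α ↓ 0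
    (r : ℝ → ℕ) (hr1 : ∀ α, 1 ≤ r α)
    (hr3 : Tendsto (fun α : ℝ => (r α : ℝ) * Real.sqrt α) (𝓝[>] 0) (𝓝 0)) :
    Tendsto (fun α : ℝ =>
        |ΨF α 1 - (1 / (r α : ℝ)) * ΨFr (r α) (α * (r α : ℝ)) 1| / Real.sqrt α)
      (𝓝[>] 0) (𝓝 0) := by
  have hbdd : ∀ᵐ ω ∂P, ∀ z, |X z ω| ≤ M := ae_all_iff.2 fun z =>
    ae_abs_le_of_condExp_indicator_ae_eq h𝒢 (hXmeas z) (hCD z) (hMbd z.2)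
  have hdiff : ∀ α : ℝ, 0 < α →
      |ΨF α 1 - (1 / (r α : ℝ)) * ΨFr (r α) (α * r α) 1| ≤ α * r α * M := by
    intro α hα
    obtain ⟨ω, hω, hA, hB⟩ := (hbdd.and ((hΨF α 1 hα one_pos).and
      (hΨFr (r α) (hr1 α) _ 1 (mul_pos hα (Nat.cast_pos.2 (hr1 α))) one_pos))).exists
    exact abs_sub_one_div_mul_le_of_tendsto_LPP hω (hr1 α) hα hA hB
  refine squeeze_zero' (Eventually.of_forall fun α => by positivity) ?_
    (by simpa using hr3.mul_const M)
  filter_upwards [self_mem_nhdsWithin] with α (hα : 0 < α)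
  calc _ ≤ α * r α * M / Real.sqrt α := by gcongr; exact hdiff α hα
    _ = r α * Real.sqrt α * M := by
      rw [div_eq_iff (Real.sqrt_pos.2 hα).ne']
      linear_combination (-(r α : ℝ) * M) * Real.mul_self_sqrt hα.le

theorem coarse_graining_lemma
    {Ω : Type} (𝒢 : MeasurableSpace Ω) [mΩ : MeasurableSpace Ω] [StandardBorelSpace Ω]
    (P : Measure Ω) [IsProbabilityMeasure P]
    (F : ℕ → Ω → Measure ℝ)
    (hFprob : ∀ j ω, IsProbabilityMeasure (F j ω))
    (hFmeas : ∀ j, Measurable (F j))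
    (X : ℕ × ℕ → Ω → ℝ)
    (hXmeas : ∀ z, Measurable (X z))
    (h𝒢 : 𝒢 ≤ mΩ)
    (hF𝒢 : ∀ j, Measurable[𝒢] (F j))
    (hCI : iCondIndepFun 𝒢 h𝒢 X P)
    (hCD : ∀ z : ℕ × ℕ, ∀ s : Set ℝ, MeasurableSet s →
      (P[(X z ⁻¹' s).indicator (fun _ => (1 : ℝ)) | 𝒢])
        =ᵐ[P] fun ω => ((F z.2 ω) s).toReal)
    -- the environment process is stationary and ergodic
    (hErg : Ergodic (fun f : ℕ → Measure ℝ => fun n => f (n + 1))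
      (Measure.map (fun ω => fun j => F j ω) P))
    -- (M-bd): uniformly bounded weights
    (M : ℝ) (hMbd : ∀ j, ∀ᵐ ω ∂P,
      (F j ω) (Set.Iic (-M)) = 0 ∧ (F j ω) (Set.Iic M) = 1)
    -- Ψ_F is the time constant of the original model
    (ΨF : ℝ → ℝ → ℝ)
    (hΨF : ∀ x y : ℝ, 0 < x → 0 < y →
      ∀ᵐ ω ∂P, Tendsto (fun n : ℕ =>
          LPP (fun z => X z ω) (0, 0) (⌊(n : ℝ) * x⌋₊, ⌊(n : ℝ) * y⌋₊) / n)
        atTop (nhds (ΨF x y)))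
    -- Ψ_{F_r} is the time constant of the coarse-grained model with row distributions F_{r,j}
    (ΨFr : ℕ → ℝ → ℝ → ℝ)
    (hΨFr : ∀ r : ℕ, 1 ≤ r → ∀ x y : ℝ, 0 < x → 0 < y →
      ∀ᵐ ω ∂P, Tendsto (fun n : ℕ =>
          LPP (blockWeight r (fun z => X z ω)) (0, 0) (⌊(n : ℝ) * x⌋₊, ⌊(n : ℝ) * y⌋₊) / n)
        atTop (nhds (ΨFr r x y)))
    -- r = r(α) is a positive-integer-valued function with r → ∞ and r√α → 0 as α ↓ 0
    (r : ℝ → ℕ) (hr1 : ∀ α, 1 ≤ r α)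
    (hr2 : Tendsto r (𝓝[>] 0) atTop)
    (hr3 : Tendsto (fun α : ℝ => (r α : ℝ) * Real.sqrt α) (𝓝[>] 0) (𝓝 0)) :
    Tendsto (fun α : ℝ =>
        |ΨF α 1 - (1 / (r α : ℝ)) * ΨFr (r α) (α * (r α : ℝ)) 1| / Real.sqrt α)
      (𝓝[>] 0) (𝓝 0) :=
  coarse_graining_lemma_general 𝒢 (mΩ := mΩ) P F X hXmeas h𝒢 hCD M hMbd ΨF hΨF ΨFr hΨFr r hr1 hr3

end
end

section
/- Let (Ω, ℱ, P) be a probability space, 𝒟 a sub-σ-field of ℱ, D an event in 𝒟, and ξ and η two integrable real random variables. Assume that E η = 0, that η is independent of 𝒟, and that ξ and η are conditionally independent given 𝒟. Then E[ ξ ∨ (η · 1_D) ] ≤ E[ ξ ∨ η ], where ∨ denotes the pointwise maximum and 1_D the indicator function of D. -/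
open MeasureTheory ProbabilityTheory Set

/-!
Put `𝒢 = 𝒟 ⊔ σ(ξ)`. Independence of `η` from `𝒟` together with conditional independence of `ξ`
and `η` given `𝒟` makes `η` independent of `𝒢`, so `E[η | 𝒢] = E η = 0`, while `E[ξ | 𝒢] = ξ`.
Since the conditional expectation is monotone, `E[ξ ∨ η | 𝒢] ≥ ξ ∨ 0`, and integrating over
`Dᶜ ∈ 𝒢` gives `E[1_{Dᶜ} (ξ ∨ 0)] ≤ E[1_{Dᶜ} (ξ ∨ η)]`. On `D` the two sides of the claim agree.
-/

theorem IsPiSystem.image2_inter {α : Type*} {S T : Set (Set α)} (hS : IsPiSystem S)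
    (hT : IsPiSystem T) : IsPiSystem (image2 (· ∩ ·) S T) := by
  rintro _ ⟨B, hB, C, hC, rfl⟩ _ ⟨B', hB', C', hC', rfl⟩ hne
  refine ⟨B ∩ B', hS B hB B' hB' ?_, C ∩ C', hT C hC C' hC' ?_, inter_inter_inter_comm B B' C C'⟩
  · exact hne.mono fun _ h ↦ ⟨h.1.1, h.2.1⟩
  · exact hne.mono fun _ h ↦ ⟨h.1.2, h.2.2⟩

theorem MeasurableSpace.generateFrom_image2_inter {α : Type*} (m₁ m₂ : MeasurableSpace α) :
    generateFrom (image2 (· ∩ ·) {s | MeasurableSet[m₁] s} {t | MeasurableSet[m₂] t})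
      = m₁ ⊔ m₂ := by
  refine le_antisymm (generateFrom_le ?_) (sup_le (fun s hs ↦ ?_) (fun t ht ↦ ?_))
  · rintro _ ⟨s, hs, t, ht, rfl⟩
    exact (le_sup_left (a := m₁) (b := m₂) s hs).inter (le_sup_right (a := m₁) (b := m₂) t ht)
  · exact measurableSet_generateFrom ⟨s, hs, univ, MeasurableSet.univ, inter_univ s⟩
  · exact measurableSet_generateFrom ⟨univ, MeasurableSet.univ, t, ht, univ_inter t⟩

namespace ProbabilityTheory

variable {Ω : Type*} {m m₁ m₂ mΩ : MeasurableSpace Ω} {μ : Measure Ω}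

theorem setIntegral_condExp_indicator_one (hm : m ≤ mΩ) [IsFiniteMeasure μ] {s t : Set Ω}
    (hs : MeasurableSet[m] s) (ht : MeasurableSet t) :
    ∫ ω in s, (μ⟦t | m⟧) ω ∂μ = μ.real (s ∩ t) := by
  rw [setIntegral_condExp hm ((integrable_const 1).indicator ht) hs, setIntegral_indicator ht,
    setIntegral_const, smul_eq_mul, mul_one]

theorem Indep.condExp_indicator_one [IsFiniteMeasure μ] (hm₁ : m₁ ≤ mΩ) (hm : m ≤ mΩ)
    (h : Indep m₁ m μ) {t : Set Ω} (ht : MeasurableSet[m₁] t) :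
    μ⟦t | m⟧ =ᵐ[μ] fun _ ↦ μ.real t := by
  refine (condExp_indep_eq hm₁ hm
    (stronglyMeasurable_const.indicator ht) h).trans (.of_forall fun _ ↦ ?_)
  rw [integral_indicator (hm₁ t ht), setIntegral_const, smul_eq_mul, mul_one]

theorem indep_sup_of_indep_of_condIndep [StandardBorelSpace Ω] [IsProbabilityMeasure μ]
    (hm : m ≤ mΩ) (hm₁ : m₁ ≤ mΩ) (hm₂ : m₂ ≤ mΩ) (h_indep : Indep m₁ m μ)
    (h_cond : CondIndep m m₁ m₂ hm μ) : Indep m₁ (m ⊔ m₂) μ := by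
  refine IndepSets.indep hm₁ (sup_le hm hm₂) (@MeasurableSpace.isPiSystem_measurableSet Ω m₁)
    ((@MeasurableSpace.isPiSystem_measurableSet Ω m).image2_inter
      (@MeasurableSpace.isPiSystem_measurableSet Ω m₂))
    (@MeasurableSpace.generateFrom_measurableSet Ω m₁).symm
    (MeasurableSpace.generateFrom_image2_inter m m₂).symm ?_
  rw [IndepSets_iff]
  rintro A _ hA ⟨B, hB, C, hC, rfl⟩
  have hAC := (condIndep_iff m m₁ m₂ hm hm₁ hm₂ μ).mp h_cond A C hA hC
  have hA_const := h_indep.condExp_indicator_one hm₁ hm hA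
  suffices μ.real (A ∩ (B ∩ C)) = μ.real A * μ.real (B ∩ C) by
    simpa only [measureReal_def, ← ENNReal.toReal_mul,
      ENNReal.toReal_eq_toReal_iff' (measure_ne_top _ _)
        (ENNReal.mul_ne_top (measure_ne_top _ _) (measure_ne_top _ _))] using this
  calc μ.real (A ∩ (B ∩ C))
      = ∫ ω in B, (μ⟦A ∩ C | m⟧) ω ∂μ := by
        rw [setIntegral_condExp_indicator_one hm hB ((hm₁ A hA).inter (hm₂ C hC)),
          inter_left_comm]
    _ = ∫ ω in B, μ.real A * (μ⟦C | m⟧) ω ∂μ := by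
        refine setIntegral_congr_ae (hm B hB) ?_
        filter_upwards [hAC, hA_const] with ω h1 h2 _
        rw [h1, Pi.mul_apply, h2]
    _ = μ.real A * μ.real (B ∩ C) := by
        rw [integral_const_mul, setIntegral_condExp_indicator_one hm hB (hm₂ C hC)]

theorem max_zero_ae_le_condExp_max [IsFiniteMeasure μ] (hm : m ≤ mΩ) {ξ η : Ω → ℝ}
    (hξ : StronglyMeasurable[m] ξ) (hη : Measurable η) (hξint : Integrable ξ μ)
    (hηint : Integrable η μ) (hmean : ∫ ω, η ω ∂μ = 0)
    (h_indep : Indep (MeasurableSpace.comap η inferInstance) m μ) :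
    (fun ω ↦ max (ξ ω) 0) ≤ᵐ[μ] μ[fun ω ↦ max (ξ ω) (η ω) | m] := by
  have hmax : Integrable (fun ω ↦ max (ξ ω) (η ω)) μ := hξint.sup hηint
  have hξ_cond : μ[ξ | m] = ξ := condExp_of_stronglyMeasurable hm hξ hξint
  have hη_cond : μ[η | m] =ᵐ[μ] fun _ ↦ 0 :=
    hmean ▸ condExp_indep_eq hη.comap_le hm (comap_measurable η).stronglyMeasurable h_indep
  filter_upwards [condExp_mono hξint hmax (.of_forall fun ω ↦ le_max_left (ξ ω) (η ω)),
    condExp_mono hηint hmax (.of_forall fun ω ↦ le_max_right (ξ ω) (η ω)), hη_cond]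
    with ω hξω hηω h0
  rw [hξ_cond] at hξω
  exact max_le hξω (h0 ▸ hηω)

theorem setIntegral_max_zero_le_setIntegral_max [IsFiniteMeasure μ] (hm : m ≤ mΩ)
    {ξ η : Ω → ℝ} (hξ : StronglyMeasurable[m] ξ) (hη : Measurable η) (hξint : Integrable ξ μ)
    (hηint : Integrable η μ) (hmean : ∫ ω, η ω ∂μ = 0)
    (h_indep : Indep (MeasurableSpace.comap η inferInstance) m μ) {s : Set Ω}
    (hs : MeasurableSet[m] s) :
    ∫ ω in s, max (ξ ω) 0 ∂μ ≤ ∫ ω in s, max (ξ ω) (η ω) ∂μ := by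
  rw [← setIntegral_condExp (f := fun ω ↦ max (ξ ω) (η ω)) hm (hξint.sup hηint) hs]
  exact setIntegral_mono_ae (hξint.sup (integrable_const 0)).integrableOn
    integrable_condExp.integrableOn
    (max_zero_ae_le_condExp_max hm hξ hη hξint hηint hmean h_indep)

end ProbabilityTheory

theorem convexity_max_lemma
    {Ω : Type} (𝒟 : MeasurableSpace Ω) [mΩ : MeasurableSpace Ω] [StandardBorelSpace Ω]
    (P : Measure Ω) [IsProbabilityMeasure P]
    (h𝒟 : 𝒟 ≤ mΩ)
    (D : Set Ω) (hD : MeasurableSet[𝒟] D)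
    (ξ η : Ω → ℝ)
    (hξmeas : Measurable ξ) (hηmeas : Measurable η)
    (hξint : Integrable ξ P) (hηint : Integrable η P)
    -- E η = 0
    (hmean : ∫ ω, η ω ∂P = 0)
    -- η is independent of 𝒟
    (hind : ProbabilityTheory.Indep (MeasurableSpace.comap η inferInstance) 𝒟 P)
    -- ξ and η are conditionally independent given 𝒟
    (hci : ProbabilityTheory.CondIndepFun 𝒟 h𝒟 ξ η P) :
    ∫ ω, max (ξ ω) (D.indicator η ω) ∂P ≤ ∫ ω, max (ξ ω) (η ω) ∂P := by
  have hDm : MeasurableSet D := h𝒟 D hD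
  have hη_indep : Indep (MeasurableSpace.comap η inferInstance)
      (𝒟 ⊔ MeasurableSpace.comap ξ inferInstance) P :=
    indep_sup_of_indep_of_condIndep h𝒟 hηmeas.comap_le hξmeas.comap_le hind
      ((condIndepFun_iff_condIndep 𝒟 h𝒟 ξ η P).mp hci).symm
  have h_off_D : ∫ ω in Dᶜ, max (ξ ω) 0 ∂P ≤ ∫ ω in Dᶜ, max (ξ ω) (η ω) ∂P :=
    setIntegral_max_zero_le_setIntegral_max (sup_le h𝒟 hξmeas.comap_le)
      ((comap_measurable ξ).mono (le_sup_right (a := 𝒟)) le_rfl).stronglyMeasurable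
      hηmeas hξint hηint hmean hη_indep (le_sup_left (a := 𝒟) _ hD.compl)
  rw [← integral_add_compl (f := fun ω ↦ max (ξ ω) (η ω)) hDm (hξint.sup hηint),
    ← integral_add_compl (f := fun ω ↦ max (ξ ω) (D.indicator η ω)) hDm
      (hξint.sup (hηint.indicator hDm)),
    setIntegral_congr_fun (g := fun ω ↦ max (ξ ω) (η ω)) hDm
      fun ω hω ↦ by simp only [indicator_of_mem hω],
    setIntegral_congr_fun (g := fun ω ↦ max (ξ ω) 0) hDm.compl
      fun ω hω ↦ by simp only [indicator_of_notMem hω]]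
  gcongr
end
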